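/- The acceptance probability is nonincreasing in the proposal rank: for every m ≥ 0, the crowding in-degree process satisfies G (m+1) q ≤ G m q, where G m q = ∑_{r=0}^{m} (P m r)·q^r is the probability that the (m+1)-st proposal is accepted. -/
import Mathlib


open Finset Filter

/-- The crowding in-degree process: `P q m r` is the probability of having
accepted `r` edges after `m` proposals, with acceptance probability `q^r`. -/
noncomputable def crowdP (q : ℝ) : ℕ → ℕ → ℝ
  | 0, r => if r = 0 then 1 else 0
  | m + 1, r =>
      crowdP q m r * (1 - q ^ r) +
        (if r = 0 then 0 else crowdP q m (r - 1) * q ^ (r - 1))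

/-- Generating function `G m z = ∑_{r=0}^m P m r · z^r`. -/
noncomputable def crowdG (q : ℝ) (m : ℕ) (z : ℝ) : ℝ :=
  ∑ r ∈ Finset.range (m + 1), crowdP q m r * z ^ r

/-- Centering sequence `x_m = (1/α)·log(1 + (e^α − 1)·m)`. -/
noncomputable def crowdX (α : ℝ) (m : ℕ) : ℝ :=
  (1 / α) * Real.log (1 + (Real.exp α - 1) * m)

/-- Mean `μ_m = ∑_{r=0}^m r · P m r`. -/
noncomputable def crowdMu (q : ℝ) (m : ℕ) : ℝ :=
  ∑ r ∈ Finset.range (m + 1), (r : ℝ) * crowdP q m r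

lemma crowdP_nonneg {q : ℝ} (hq0 : 0 ≤ q) (hq1 : q ≤ 1) :
    ∀ m r, 0 ≤ crowdP q m r := by
  intro m
  induction m with
  | zero => intro r; simp [crowdP]; split <;> norm_num
  | succ n ih =>
    intro r
    have h1 : q ^ r ≤ 1 := pow_le_one₀ hq0 hq1
    have h2 := ih r
    have h3 : (0:ℝ) ≤ q ^ (r-1) := pow_nonneg hq0 _
    unfold crowdP
    split
    · nlinarith
    · have h4 := ih (r - 1)
      nlinarith

lemma crowdP_zero_of_lt (q : ℝ) : ∀ m r, m < r → crowdP q m r = 0 := by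
  intro m
  induction m with
  | zero => intro r hr; simp [crowdP]; omega
  | succ n ih =>
    intro r hr
    unfold crowdP
    rw [ih r (by omega)]
    split
    · ring
    · rw [ih (r - 1) (by omega)]; ring

theorem stmt_14 (α : ℝ) (hα : 0 < α) (m : ℕ) :
    crowdG (Real.exp (-α)) (m + 1) (Real.exp (-α)) ≤
      crowdG (Real.exp (-α)) m (Real.exp (-α)) := by
  set q := Real.exp (-α) with hq
  have hq0 : 0 < q := Real.exp_pos _
  have hq1 : q < 1 := Real.exp_lt_one_iff.mpr (by linarith)
  have key : crowdG q (m + 1) q =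
      crowdG q m q - ∑ r ∈ Finset.range (m + 1),
        crowdP q m r * (q ^ (2 * r) * (1 - q)) := by
    unfold crowdG
    have expand : ∀ r, crowdP q (m + 1) r * q ^ r =
        crowdP q m r * (1 - q ^ r) * q ^ r +
          (if r = 0 then 0 else crowdP q m (r - 1) * q ^ (r - 1)) * q ^ r := by
      intro r; rw [crowdP]; ring
    rw [Finset.sum_congr rfl (fun r _ => expand r), Finset.sum_add_distrib]
    have h1 : ∑ r ∈ Finset.range (m + 1 + 1), crowdP q m r * (1 - q ^ r) * q ^ r
        = ∑ r ∈ Finset.range (m + 1), crowdP q m r * (1 - q ^ r) * q ^ r := by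
      rw [Finset.sum_range_succ, crowdP_zero_of_lt q m (m + 1) (by omega)]
      ring
    have h2 : ∑ r ∈ Finset.range (m + 1 + 1),
        (if r = 0 then 0 else crowdP q m (r - 1) * q ^ (r - 1)) * q ^ r
        = ∑ r ∈ Finset.range (m + 1), crowdP q m r * q ^ r * q ^ (r + 1) := by
      rw [Finset.sum_range_succ']
      simp only [Nat.add_sub_cancel, Nat.succ_ne_zero, if_false, if_pos, pow_zero,
        mul_one, ite_true, zero_mul, add_zero]
    rw [h1, h2, ← Finset.sum_add_distrib, ← Finset.sum_sub_distrib]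
    apply Finset.sum_congr rfl
    intro r _
    have : q ^ (2 * r) = q ^ r * q ^ r := by rw [two_mul, pow_add]
    rw [this]
    ring
  rw [key]
  have hnn : 0 ≤ ∑ r ∈ Finset.range (m + 1),
      crowdP q m r * (q ^ (2 * r) * (1 - q)) := by
    apply Finset.sum_nonneg
    intro r _
    have := crowdP_nonneg hq0.le hq1.le m r
    have hpos : (0:ℝ) ≤ q ^ (2 * r) := by positivity
    have : (0:ℝ) ≤ 1 - q := by linarith
    positivity
  linarith
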